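/- The function z ↦ y^{1/2}|θ(z)|², where z = x+iy, is invariant under the action of Γ₀(4) on the upper half-plane: for γ = (a b; c d) ∈ Γ₀(4), Im(γz)^{1/2}|θ(γz)|² = Im(z)^{1/2}|θ(z)|². -/

import Mathlib

open Complex CongruenceSubgroup

/-- The Jacobi theta function `θ(z) = ∑_{n ∈ ℤ} exp(2πin²z)`. -/
noncomputable def jacobiThetaFn (z : ℂ) : ℂ :=
  ∑' n : ℤ, Complex.exp (2 * Real.pi * Complex.I * (n : ℂ) ^ 2 * z)

/-- The Möbius action of `γ ∈ SL₂(ℤ)` on `ℂ`: `γz = (az+b)/(cz+d)`. -/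
noncomputable def moebius (γ : Matrix.SpecialLinearGroup (Fin 2) ℤ) (z : ℂ) : ℂ :=
  (((γ : Matrix (Fin 2) (Fin 2) ℤ) 0 0 : ℂ) * z + ((γ : Matrix (Fin 2) (Fin 2) ℤ) 0 1 : ℂ)) /
    (((γ : Matrix (Fin 2) (Fin 2) ℤ) 1 0 : ℂ) * z + ((γ : Matrix (Fin 2) (Fin 2) ℤ) 1 1 : ℂ))

/-! With Mathlib's `ϑ(τ) = ∑ exp(πin²τ)` one has `θ(z) = ϑ(2z)`, so the claim is about
`G(τ) = √(Im τ) ‖ϑ(τ)‖²` at `τ = 2z`. The functional equation `ϑ(-1/τ) = (-iτ)^{1/2} ϑ(τ)` and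
the period `2` make `G` invariant under `S` and `T²`, which generate `Γ(2)` (a Euclidean descent
on `|c|`). Conjugation by `diag(2, 1)` maps `γ = (a, b; c, d) ∈ Γ₀(4)` to
`γ' = (a, 2b; c/2, d) ∈ Γ(2)`, and `2 · γz = γ'(2z)`. -/

open UpperHalfPlane ModularGroup Matrix.SpecialLinearGroup
open scoped MatrixGroups

theorem Int.exists_abs_add_two_mul_mul_lt {x y : ℤ} (hy : y ≠ 0) (hxy : Odd (x + y)) :
    ∃ n : ℤ, |x + 2 * n * y| < |y| := by
  obtain ⟨n, hn⟩ : ∃ n : ℤ, |x + 2 * n * y| ≤ |y| := by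
    have h2y : 0 < 2 * |y| := by positivity
    have hr := Int.mul_ediv_add_emod x (2 * |y|)
    have hr0 := Int.emod_nonneg x h2y.ne'
    have hr1 := Int.emod_lt_of_pos x h2y
    set q := x / (2 * |y|)
    set r := x % (2 * |y|)
    rcases abs_choice y with hy' | hy' <;> rw [hy'] at hr hr1 ⊢
    · rcases le_or_gt r y with h | h
      · exact ⟨-q, by rw [abs_le]; constructor <;> nlinarith⟩
      · exact ⟨-q - 1, by rw [abs_le]; constructor <;> nlinarith⟩
    · rcases le_or_gt r (-y) with h | h
      · exact ⟨q, by rw [abs_le]; constructor <;> nlinarith⟩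
      · exact ⟨q + 1, by rw [abs_le]; constructor <;> nlinarith⟩
  refine ⟨n, hn.lt_of_ne fun h => ?_⟩
  rcases abs_eq_abs.mp h with h | h
  · exact Int.not_even_iff_odd.mpr hxy ⟨y - n * y, by linear_combination h⟩
  · exact Int.not_even_iff_odd.mpr hxy ⟨-(n * y), by linear_combination h⟩

namespace ModularGroup

theorem T_zpow_mul_apply_zero_zero (n : ℤ) (g : SL(2, ℤ)) :
    (T ^ n * g) 0 0 = g 0 0 + n * g 1 0 := by
  simp [coe_T_zpow, Matrix.mul_apply, Fin.sum_univ_two]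

theorem S_mul_T_zpow_mul_S_inv_mul_apply_one_zero (n : ℤ) (g : SL(2, ℤ)) :
    (S * T ^ (-n) * S⁻¹ * g) 1 0 = g 1 0 + n * g 0 0 := by
  simp [coe_T_zpow, coe_S, Matrix.mul_apply, Fin.sum_univ_two, Matrix.SpecialLinearGroup.coe_inv,
    Matrix.adjugate_fin_two]
  ring

end ModularGroup

namespace CongruenceSubgroup

theorem mem_Gamma_two_iff {γ : SL(2, ℤ)} :
    γ ∈ Γ(2) ↔ Odd (γ 0 0) ∧ Even (γ 0 1) ∧ Even (γ 1 0) ∧ Odd (γ 1 1) := by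
  simp only [Gamma_mem, ZMod.intCast_eq_one_iff_odd, ZMod.intCast_eq_zero_iff_even]

theorem T_zpow_two_mul_mem_Gamma_two (n : ℤ) : T ^ (2 * n) ∈ Γ(2) := by
  rw [mem_Gamma_two_iff]
  simp [coe_T_zpow]

theorem T_zpow_two_mul_mem_closure_S_T_sq (k : ℤ) : T ^ (2 * k) ∈ Subgroup.closure {S, T ^ 2} := by
  rw [zpow_mul]
  exact zpow_mem (Subgroup.subset_closure (by simp)) k

theorem mem_closure_S_T_sq_of_apply_one_zero_eq_zero {γ : SL(2, ℤ)} (hγ : γ ∈ Γ(2))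
    (hc : γ 1 0 = 0) : γ ∈ Subgroup.closure {S, T ^ 2} := by
  have hS : S ∈ Subgroup.closure {S, T ^ 2} := Subgroup.subset_closure (by simp)
  have hdet : γ 0 0 * γ 1 1 = 1 := by
    have h := γ.det_coe
    rwa [Matrix.det_fin_two, hc, mul_zero, sub_zero] at h
  obtain ⟨k, hk⟩ := (mem_Gamma_two_iff.mp hγ).2.1
  rcases Int.eq_one_or_neg_one_of_mul_eq_one' hdet with ⟨ha, hd⟩ | ⟨ha, hd⟩
  · convert T_zpow_two_mul_mem_closure_S_T_sq k using 1
    ext i j; fin_cases i <;> fin_cases j <;> simp [coe_T_zpow, ha, hd, hc, hk, two_mul]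
  · convert mul_mem (pow_mem hS 2) (T_zpow_two_mul_mem_closure_S_T_sq (-k)) using 1
    ext i j; fin_cases i <;> fin_cases j <;> simp [coe_T_zpow, coe_S, sq, ha, hd, hc, hk, two_mul]

theorem exists_abs_apply_one_zero_lt {γ : SL(2, ℤ)} (hγ : γ ∈ Γ(2)) (hc : γ 1 0 ≠ 0) :
    ∃ n m : ℤ, S * T ^ (-(2 * m)) * S⁻¹ * (T ^ (2 * n) * γ) ∈ Γ(2) ∧
      |(S * T ^ (-(2 * m)) * S⁻¹ * (T ^ (2 * n) * γ)) 1 0| < |γ 1 0| := by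
  obtain ⟨ha, -, hc2, -⟩ := mem_Gamma_two_iff.mp hγ
  -- reduce `a` modulo `2c`, then `c` modulo `2a`; parities keep both remainders strict
  obtain ⟨n, hn⟩ := Int.exists_abs_add_two_mul_mul_lt hc (ha.add_even hc2)
  set γ₁ := T ^ (2 * n) * γ
  have hγ₁ : γ₁ ∈ Γ(2) := mul_mem (T_zpow_two_mul_mem_Gamma_two n) hγ
  have ha₁ : γ₁ 0 0 = γ 0 0 + 2 * n * γ 1 0 := T_zpow_mul_apply_zero_zero _ _
  have hc₁ : γ₁ 1 0 = γ 1 0 := congrFun (T_pow_mul_apply_one _ _) 0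
  obtain ⟨ha₁odd, -, -, -⟩ := mem_Gamma_two_iff.mp hγ₁
  obtain ⟨m, hm⟩ := Int.exists_abs_add_two_mul_mul_lt
    (fun h => by simp [h] at ha₁odd) (hc2.add_odd ha₁odd)
  refine ⟨n, m, mul_mem ?_ hγ₁, ?_⟩
  · simpa using (Gamma_normal 2).conj_mem _ (T_zpow_two_mul_mem_Gamma_two (-m)) S
  · rw [S_mul_T_zpow_mul_S_inv_mul_apply_one_zero, hc₁]
    exact hm.trans (ha₁ ▸ hn)

theorem Gamma_two_le_closure_S_T_sq : Γ(2) ≤ Subgroup.closure {S, T ^ 2} := by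
  have hT := T_zpow_two_mul_mem_closure_S_T_sq
  have hST (k : ℤ) : S * T ^ (-(2 * k)) * S⁻¹ ∈ Subgroup.closure {S, T ^ 2} := by
    have hS : S ∈ Subgroup.closure {S, T ^ 2} := Subgroup.subset_closure (by simp)
    simpa [← mul_neg] using mul_mem (mul_mem hS (hT (-k))) (inv_mem hS)
  intro γ hγ
  induction hN : (γ 1 0).natAbs using Nat.strong_induction_on generalizing γ with
  | _ N ih =>
  rcases eq_or_ne (γ 1 0) 0 with hc | hc
  · exact mem_closure_S_T_sq_of_apply_one_zero_eq_zero hγ hc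
  obtain ⟨n, m, hγ₂, hlt⟩ := exists_abs_apply_one_zero_lt hγ hc
  have hγ₂K := ih _ (by rw [← hN]; zify; exact hlt) hγ₂ rfl
  have hγ : γ = (T ^ (2 * n))⁻¹ * (S * T ^ (-(2 * m)) * S⁻¹)⁻¹ *
      (S * T ^ (-(2 * m)) * S⁻¹ * (T ^ (2 * n) * γ)) := by group
  rw [hγ]
  exact mul_mem (mul_mem (inv_mem (hT n)) (inv_mem (hST m))) hγ₂K

end CongruenceSubgroup

def MulAction.invariantSubgroup {G α β : Type*} [Group G] [MulAction G α] (f : α → β) :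
    Subgroup G where
  carrier := {g | ∀ x, f (g • x) = f x}
  one_mem' x := by rw [one_smul]
  mul_mem' hg hh x := by rw [mul_smul, hg, hh]
  inv_mem' {g} hg x := by rw [← hg, smul_inv_smul]

noncomputable def thetaPeterssonNormSq (τ : ℍ) : ℝ := √τ.im * ‖jacobiTheta τ‖ ^ 2

theorem norm_cpow_one_half_sq (w : ℂ) : ‖w ^ (1 / 2 : ℂ)‖ ^ 2 = ‖w‖ := by
  rw [show (1 / 2 : ℂ) = ((1 / 2 : ℝ) : ℂ) by push_cast; rfl, norm_cpow_real,
    ← Real.sqrt_eq_rpow, Real.sq_sqrt (norm_nonneg w)]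

theorem thetaPeterssonNormSq_S_smul (τ : ℍ) :
    thetaPeterssonNormSq (S • τ) = thetaPeterssonNormSq τ := by
  have hτ : (τ : ℂ) ≠ 0 := τ.ne_zero
  rw [thetaPeterssonNormSq, thetaPeterssonNormSq, jacobiTheta_S_smul, norm_mul, mul_pow,
    norm_cpow_one_half_sq, ModularGroup.im_smul_eq_div_normSq, Real.sqrt_div' _ (normSq_nonneg _)]
  simp [denom, coe_S, Complex.normSq_eq_norm_sq]
  field_simp

theorem thetaPeterssonNormSq_T_sq_smul (τ : ℍ) :
    thetaPeterssonNormSq (T ^ 2 • τ) = thetaPeterssonNormSq τ := by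
  rw [thetaPeterssonNormSq, thetaPeterssonNormSq, jacobiTheta_T_sq_smul,
    ModularGroup.im_smul_eq_div_normSq]
  simp [denom, coe_T, sq, Matrix.mul_apply, Fin.sum_univ_two]

/-- `diag(2, 1) * g * diag(2, 1)⁻¹`, which is integral when the lower-left entry of `g` is even. -/
def conjDiagTwo (g : SL(2, ℤ)) (k : ℤ) (hk : g 1 0 = 2 * k) : SL(2, ℤ) :=
  ⟨!![g 0 0, 2 * g 0 1; k, g 1 1], by
    have h := g.det_coe
    rw [Matrix.det_fin_two, hk] at h
    rw [Matrix.det_fin_two_of]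
    linear_combination h⟩

theorem conjDiagTwo_mem_Gamma_two {g : SL(2, ℤ)} {k : ℤ} (hk : g 1 0 = 2 * k) (hk2 : Even k) :
    conjDiagTwo g k hk ∈ Γ(2) := by
  have hdet : Odd (g 0 0 * g 1 1) := by
    have h := g.det_coe
    rw [Matrix.det_fin_two, hk] at h
    exact ⟨g 0 1 * k, by linear_combination h⟩
  rw [mem_Gamma_two_iff]
  exact ⟨(Int.odd_mul.mp hdet).1, even_two_mul _, hk2, (Int.odd_mul.mp hdet).2⟩

theorem coe_conjDiagTwo_smul {g : SL(2, ℤ)} {k : ℤ} (hk : g 1 0 = 2 * k) {τ τ' : ℍ}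
    (hτ' : (τ' : ℂ) = 2 * τ) : ((conjDiagTwo g k hk • τ' : ℍ) : ℂ) = 2 * (g • τ : ℍ) := by
  rw [coe_specialLinearGroup_apply, coe_specialLinearGroup_apply, hτ']
  simp [conjDiagTwo, hk]
  field_simp

theorem jacobiThetaFn_eq_jacobiTheta (z : ℂ) : jacobiThetaFn z = jacobiTheta (2 * z) :=
  tsum_congr fun n => by ring_nf

theorem sqrt_im_mul_norm_jacobiThetaFn_sq {τ τ' : ℍ} (hτ' : (τ' : ℂ) = 2 * τ) :
    √(τ : ℂ).im * ‖jacobiThetaFn τ‖ ^ 2 = thetaPeterssonNormSq τ' / √2 := by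
  have him : τ'.im = 2 * τ.im := by simp [← coe_im, hτ']
  rw [thetaPeterssonNormSq, him, coe_im, jacobiThetaFn_eq_jacobiTheta, ← hτ',
    Real.sqrt_mul zero_le_two]
  field_simp

theorem Gamma_two_le_invariantSubgroup_thetaPeterssonNormSq :
    Γ(2) ≤ MulAction.invariantSubgroup thetaPeterssonNormSq := by
  refine Gamma_two_le_closure_S_T_sq.trans ((Subgroup.closure_le _).mpr ?_)
  rintro g (rfl | rfl)
  · exact thetaPeterssonNormSq_S_smul
  · exact thetaPeterssonNormSq_T_sq_smul

/-- `y^{1/2}|θ(z)|²` is invariant under `Γ₀(4)`. -/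
theorem theta_invariance (γ : Matrix.SpecialLinearGroup (Fin 2) ℤ) (hγ : γ ∈ Gamma0 4)
    (z : ℂ) (hz : 0 < z.im) :
    Real.sqrt (moebius γ z).im * ‖jacobiThetaFn (moebius γ z)‖ ^ 2 =
      Real.sqrt z.im * ‖jacobiThetaFn z‖ ^ 2 := by
  obtain ⟨k, hk⟩ : (4 : ℤ) ∣ γ 1 0 := (ZMod.intCast_zmod_eq_zero_iff_dvd _ 4).mp (Gamma0_mem.mp hγ)
  let τ : ℍ := ⟨z, hz⟩
  let τ₂ : ℍ := ⟨2 * z, by simpa using hz⟩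
  have hk₂ : γ 1 0 = 2 * (2 * k) := by rw [hk]; ring
  have hγ₂ := conjDiagTwo_mem_Gamma_two hk₂ (even_two_mul k)
  have hmoebius : moebius γ z = ↑(γ • τ) := by
    rw [coe_specialLinearGroup_apply]; simp [moebius, τ]
  rw [hmoebius, sqrt_im_mul_norm_jacobiThetaFn_sq (coe_conjDiagTwo_smul hk₂ (τ' := τ₂) rfl),
    Gamma_two_le_invariantSubgroup_thetaPeterssonNormSq hγ₂ τ₂]
  exact (sqrt_im_mul_norm_jacobiThetaFn_sq (τ := τ) (τ' := τ₂) rfl).symm
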